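/- Let G be a finite simple graph on n vertices, let A and Z be disjoint sets of vertices and Q = V(G) \ (A ∪ Z). Let d ≥ 1, λ > 0, κ > 2λ and c > 0 be reals. Suppose that (i) |E(G[Q])| < λ·d·|Q|, (ii) every vertex v ∈ Q whose degree in G[Q] is strictly less than κ·d has strictly more than d neighbors in A, and (iii) the number of vertices of Q with strictly more than d neighbors in A is strictly less than c·d·|A|. Then |A ∪ Z| > n / (c·d·κ/(κ − 2λ) + 1). -/

import Mathlib

/-!
Split `Q` into the vertices of degree `< κd` in `G[Q]` and the rest. By (ii) the former all have
more than `d` neighbours in `A`, so by (iii) there are fewer than `cd|A|` of them; by the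
handshake lemma and (i) there are fewer than `(2λ/κ)|Q|` of the latter. Hence
`(κ - 2λ)|Q| < cdκ|A ∪ Z|`, and `n = |Q| + |A ∪ Z|`.
-/

namespace SimpleGraph

variable {V : Type*} (G : SimpleGraph V) (s : Set V)

theorem ncard_inter_neighborSet_eq_degree_induce (x : s)
    [Fintype ((G.induce s).neighborSet x)] :
    (s ∩ G.neighborSet x).ncard = (G.induce s).degree x := by
  rw [← card_neighborSet_eq_degree, ← Nat.card_eq_fintype_card, ← Nat.card_coe_set_eq]
  exact Nat.card_congr (Equiv.subtypeSubtypeEquivSubtypeInter (· ∈ s) (G.Adj x)).symm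

theorem sum_ncard_inter_neighborSet [Fintype s] :
    ∑ v ∈ s.toFinset, (s ∩ G.neighborSet v).ncard = 2 * (G.induce s).edgeSet.ncard := by
  classical
  rw [← Finset.sum_set_coe]
  simp only [ncard_inter_neighborSet_eq_degree_induce]
  rw [sum_degrees_eq_twice_card_edges, Set.ncard_eq_toFinset_card']
  rfl

theorem mul_ncard_le_two_mul_ncard_edgeSet_induce [Finite s] (t : ℝ) :
    t * {v ∈ s | t ≤ (s ∩ G.neighborSet v).ncard}.ncard ≤ 2 * (G.induce s).edgeSet.ncard := by
  classical
  have := Fintype.ofFinite s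
  set H := {v ∈ s | t ≤ ((s ∩ G.neighborSet v).ncard : ℝ)}
  calc t * H.ncard
      ≤ ∑ v ∈ H.toFinset, ((s ∩ G.neighborSet v).ncard : ℝ) := by
        rw [Set.ncard_eq_toFinset_card', mul_comm, ← nsmul_eq_mul]
        exact Finset.card_nsmul_le_sum _ _ _ fun v hv => (Set.mem_toFinset.1 hv).2
    _ ≤ ∑ v ∈ s.toFinset, ((s ∩ G.neighborSet v).ncard : ℝ) :=
        Finset.sum_le_sum_of_subset_of_nonneg (Set.toFinset_subset_toFinset.2 (Set.sep_subset _ _))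
          fun _ _ _ => by positivity
    _ = 2 * (G.induce s).edgeSet.ncard := by
        exact_mod_cast G.sum_ncard_inter_neighborSet s

end SimpleGraph

theorem add_div_lt_of_mul_lt {q s b e : ℝ} (he : 0 < e) (hb : 0 ≤ b) (h : q * e < b * s) :
    (q + s) / (b / e + 1) < s := by
  have hq : q < b / e * s := by rw [div_mul_eq_mul_div, lt_div_iff₀ he]; linarith
  rw [div_lt_iff₀ (by positivity)]
  linarith

theorem decided_fraction_large_general {V : Type*} [Fintype V] (G : SimpleGraph V)
    (A Z : Set V) (Q : Set V) (hQ : Q = (A ∪ Z)ᶜ)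
    (d lam kap c : ℝ) (hd : 1 ≤ d) (hlam : 0 < lam) (hkap : 2 * lam < kap) (hc : 0 < c)
    (hE : (((G.induce Q).edgeSet.ncard : ℝ)) < lam * d * Q.ncard)
    (hlow : ∀ v ∈ Q, ((Q ∩ G.neighborSet v).ncard : ℝ) < kap * d →
      d < ((A ∩ G.neighborSet v).ncard : ℝ))
    (hfew : ({v ∈ Q | d < ((A ∩ G.neighborSet v).ncard : ℝ)}.ncard : ℝ) < c * d * A.ncard) :
    (Fintype.card V : ℝ) / (c * d * kap / (kap - 2 * lam) + 1) < ((A ∪ Z).ncard : ℝ) := by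
  have hd0 : 0 < d := by linarith
  have hkap0 : 0 < kap := by linarith
  set H := {v ∈ Q | kap * d ≤ ((Q ∩ G.neighborSet v).ncard : ℝ)}
  have hH : kap * H.ncard < 2 * lam * Q.ncard := by
    refine lt_of_mul_lt_mul_right ?_ hd0.le
    linarith [G.mul_ncard_le_two_mul_ncard_edgeSet_induce Q (kap * d)]
  have hL : ((Q \ H).ncard : ℝ) < c * d * (A ∪ Z).ncard :=
    calc ((Q \ H).ncard : ℝ)
        ≤ ({v ∈ Q | d < ((A ∩ G.neighborSet v).ncard : ℝ)}.ncard : ℝ) := by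
          refine Nat.cast_le.2 (Set.ncard_le_ncard fun v hv => ?_)
          exact ⟨hv.1, hlow v hv.1 (not_le.1 fun h => hv.2 ⟨hv.1, h⟩)⟩
      _ < c * d * A.ncard := hfew
      _ ≤ c * d * (A ∪ Z).ncard :=
          mul_le_mul_of_nonneg_left (mod_cast Set.ncard_le_ncard Set.subset_union_left)
            (by positivity)
  have hQ_split : ((Q \ H).ncard : ℝ) + H.ncard = Q.ncard := by
    exact_mod_cast Set.ncard_sdiff_add_ncard_of_subset (Set.sep_subset _ _)
  have hV : (Fintype.card V : ℝ) = Q.ncard + (A ∪ Z).ncard := by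
    rw [← Nat.card_eq_fintype_card, ← Set.ncard_add_ncard_compl (A ∪ Z), ← hQ]
    push_cast; ring
  rw [hV]
  refine add_div_lt_of_mul_lt (by linarith) (by positivity) ?_
  linear_combination hH + mul_lt_mul_of_pos_left hL hkap0 - kap * hQ_split

/-- If none of the three rules of the algorithm is applicable, then the set `A ∪ Z` of
already-decided vertices constitutes a constant fraction of the whole vertex set. -/
theorem decided_fraction_large {V : Type*} [Fintype V] (G : SimpleGraph V)
    (A Z : Set V) (hAZ : Disjoint A Z) (Q : Set V) (hQ : Q = (A ∪ Z)ᶜ)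
    (d lam kap c : ℝ) (hd : 1 ≤ d) (hlam : 0 < lam) (hkap : 2 * lam < kap) (hc : 0 < c)
    (hE : (((G.induce Q).edgeSet.ncard : ℝ)) < lam * d * Q.ncard)
    (hlow : ∀ v ∈ Q, ((Q ∩ G.neighborSet v).ncard : ℝ) < kap * d →
      d < ((A ∩ G.neighborSet v).ncard : ℝ))
    (hfew : ({v ∈ Q | d < ((A ∩ G.neighborSet v).ncard : ℝ)}.ncard : ℝ) < c * d * A.ncard) :
    (Fintype.card V : ℝ) / (c * d * kap / (kap - 2 * lam) + 1) < ((A ∪ Z).ncard : ℝ) :=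
  decided_fraction_large_general G A Z Q hQ d lam kap c hd hlam hkap hc hE hlow hfew
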